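/- arXiv:2002.00563 — 4 statements merged into one kernel-verified Lean document; each statement's English description precedes it below -/
import Mathlib

section
/- Fix a finite field F_q and integers 1 ≤ d_1 ≤ d_2 ≤ … ≤ d_m with m ≥ 2. The number of m-tuples (f_1,…,f_m) of monic polynomials in F_q[x] with deg f_i = d_i for all i and with no common root in an algebraic closure of F_q (equivalently, gcd(f_1,…,f_m) = 1) equals q^{d_1+⋯+d_m} − q^{d_1+⋯+d_m−m+1}. -/
/-!
Every tuple `f` of monic polynomials factors uniquely as `f i = g * h i`, where `g = gcd f` is
monic and `h` is a coprime tuple of monic polynomials of degrees `d i - deg g`. Sorting the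
`q ^ ∑ d` tuples by `e = deg g ≤ min d` gives `q ^ ∑ d = ∑_{e ≤ min d} q ^ e N(d - e)`, where `N`
counts coprime tuples. The terms with `e ≥ 1` are `q` times the same identity for `d - 1`, so
`q ^ ∑ d = N(d) + q * q ^ ∑ (d - 1)`.
-/

open Polynomial Finset

section

variable {F ι : Type*} [Field F]

abbrev MonicOfDegree (F : Type*) [Field F] (e : ℕ) : Type _ :=
  {p : F[X] // p.Monic ∧ p.natDegree = e}

abbrev MonicTuple (F : Type*) [Field F] (d : ι → ℕ) : Type _ :=
  {f : ι → F[X] // ∀ i, (f i).Monic ∧ (f i).natDegree = d i}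

abbrev CoprimeMonicTuple (F : Type*) [Field F] (d : ι → ℕ) : Type _ :=
  {f : ι → F[X] // (∀ i, (f i).Monic ∧ (f i).natDegree = d i) ∧
    ∀ p : F[X], (∀ i, p ∣ f i) → IsUnit p}

noncomputable def monicOfDegreeEquiv (e : ℕ) : MonicOfDegree F e ≃ (Fin e → F) :=
  (monicEquivDegreeLT e).trans (degreeLTEquiv F e).toEquiv

def monicTupleEquivPi (d : ι → ℕ) : MonicTuple F d ≃ ∀ i, MonicOfDegree F (d i) :=
  Equiv.subtypePiEquivPi (p := fun i (p : F[X]) => p.Monic ∧ p.natDegree = d i)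

instance [Finite F] (e : ℕ) : Finite (MonicOfDegree F e) :=
  .of_equiv _ (monicOfDegreeEquiv e).symm

instance [Finite F] [Finite ι] (d : ι → ℕ) : Finite (MonicTuple F d) :=
  .of_equiv _ (monicTupleEquivPi d).symm

instance [Finite F] [Finite ι] (d : ι → ℕ) : Finite (CoprimeMonicTuple F d) :=
  .of_injective (β := MonicTuple F d) (fun f => ⟨f.1, f.2.1⟩) fun _ _ h =>
    Subtype.ext (congrArg (fun x : MonicTuple F d => x.1) h)

theorem card_monicOfDegree [Fintype F] (e : ℕ) :
    Nat.card (MonicOfDegree F e) = Fintype.card F ^ e := by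
  simp [Nat.card_congr (monicOfDegreeEquiv (F := F) e)]

theorem card_monicTuple [Fintype F] [Fintype ι] (d : ι → ℕ) :
    Nat.card (MonicTuple F d) = Fintype.card F ^ ∑ i, d i := by
  simp_rw [Nat.card_congr (monicTupleEquivPi d), Nat.card_pi, card_monicOfDegree,
    prod_pow_eq_pow_sum]

section Gcd

variable [Fintype ι]

theorem Finset.univ_gcd_eq_one_iff {α : Type*} [CommMonoidWithZero α] [NormalizedGCDMonoid α]
    {f : ι → α} : univ.gcd f = 1 ↔ ∀ p, (∀ i, p ∣ f i) → IsUnit p := by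
  refine ⟨fun h p hp => isUnit_of_dvd_one (h ▸ dvd_gcd fun i _ => hp i), fun h => ?_⟩
  rw [← normalize_gcd, normalize_eq_one]
  exact h _ fun i => gcd_dvd (mem_univ i)

variable [DecidableEq F]

theorem Polynomial.Monic.univ_gcd_mul_left {g : F[X]} (hg : g.Monic) {h : ι → F[X]}
    (h1 : univ.gcd h = 1) : univ.gcd (fun i => g * h i) = g := by
  rw [Finset.gcd_mul_left, h1, mul_one, hg.normalize_eq_self]

theorem univ_gcd_ne_zero_of_monic [Nonempty ι] {f : ι → F[X]} (hf : ∀ i, (f i).Monic) :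
    univ.gcd f ≠ 0 := fun h =>
  (hf (Classical.arbitrary ι)).ne_zero (gcd_eq_zero_iff.1 h _ (mem_univ _))

theorem monic_univ_gcd [Nonempty ι] {f : ι → F[X]} (hf : ∀ i, (f i).Monic) :
    (univ.gcd f).Monic :=
  normalize_gcd (s := univ) (f := f) ▸ monic_normalize (univ_gcd_ne_zero_of_monic hf)

noncomputable def gcdDecomposition [Nonempty ι] (d : ι → ℕ) (e : ℕ) (he : ∀ i, e ≤ d i) :
    {f : MonicTuple F d // (univ.gcd f.1).natDegree = e} ≃
      MonicOfDegree F e × CoprimeMonicTuple F (fun i => d i - e) where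
  toFun f :=
    have hmon : (univ.gcd f.1.1).Monic := monic_univ_gcd fun i => (f.1.2 i).1
    have hmul (i : ι) : univ.gcd f.1.1 * (f.1.1 i / univ.gcd f.1.1) = f.1.1 i :=
      EuclideanDomain.mul_div_cancel' hmon.ne_zero (gcd_dvd (mem_univ i))
    (⟨univ.gcd f.1.1, hmon, f.2⟩,
      ⟨fun i => f.1.1 i / univ.gcd f.1.1,
        fun i => by
          have hq := hmon.of_mul_monic_left ((hmul i).symm ▸ (f.1.2 i).1)
          have hdeg := hmon.natDegree_mul hq
          rw [hmul i, (f.1.2 i).2, f.2] at hdeg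
          exact ⟨hq, by dsimp only; omega⟩,
        univ_gcd_eq_one_iff.1 <|
          gcd_div_eq_one (mem_univ _) (f.1.2 (Classical.arbitrary ι)).1.ne_zero⟩)
  invFun gh :=
    ⟨⟨fun i => gh.1.1 * gh.2.1 i, fun i => ⟨gh.1.2.1.mul (gh.2.2.1 i).1, by
        rw [gh.1.2.1.natDegree_mul (gh.2.2.1 i).1, gh.1.2.2, (gh.2.2.1 i).2]
        exact Nat.add_sub_cancel' (he i)⟩⟩,
      by simp only [gh.1.2.1.univ_gcd_mul_left (univ_gcd_eq_one_iff.2 gh.2.2.2), gh.1.2.2]⟩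
  left_inv f := Subtype.ext <| Subtype.ext <| funext fun i =>
    EuclideanDomain.mul_div_cancel' (univ_gcd_ne_zero_of_monic fun i => (f.1.2 i).1)
      (gcd_dvd (mem_univ i))
  right_inv gh := by
    have hg := gh.1.2.1.univ_gcd_mul_left (univ_gcd_eq_one_iff.2 gh.2.2.2)
    refine Prod.ext (Subtype.ext hg) (Subtype.ext (funext fun i => ?_))
    simp only [hg]
    exact mul_div_cancel_left₀ _ gh.1.2.1.ne_zero

end Gcd

section Counting

variable [Fintype F] [Fintype ι]

theorem pow_sum_eq_sum_card_coprimeMonicTuple (d : ι → ℕ) {i₀ : ι} (hi₀ : ∀ i, d i₀ ≤ d i) :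
    Fintype.card F ^ ∑ i, d i = ∑ e ∈ range (d i₀ + 1),
      Fintype.card F ^ e * Nat.card (CoprimeMonicTuple F fun i => d i - e) := by
  classical
  have : Nonempty ι := ⟨i₀⟩
  let gcdDegree (f : MonicTuple F d) : Fin (d i₀ + 1) :=
    ⟨(univ.gcd f.1).natDegree, Nat.lt_succ_of_le <| (f.2 i₀).2 ▸
      natDegree_le_of_dvd (gcd_dvd (mem_univ i₀)) (f.2 i₀).1.ne_zero⟩
  have fiber (e : Fin (d i₀ + 1)) :
      {f // gcdDegree f = e} ≃ MonicOfDegree F e × CoprimeMonicTuple F fun i => d i - e :=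
    (Equiv.subtypeEquivRight fun _ => Fin.ext_iff).trans
      (gcdDecomposition d e fun i => (Nat.lt_succ_iff.1 e.2).trans (hi₀ i))
  rw [← card_monicTuple, ← Nat.card_congr (Equiv.sigmaFiberEquiv gcdDegree),
    Nat.card_congr (Equiv.sigmaCongrRight fiber), Nat.card_sigma, ← Fin.sum_univ_eq_sum_range]
  simp only [Nat.card_prod, card_monicOfDegree]

theorem card_coprimeMonicTuple_add_pow [Nonempty ι] {d : ι → ℕ} (hd : ∀ i, 1 ≤ d i) :
    Nat.card (CoprimeMonicTuple F d) + Fintype.card F ^ (∑ i, (d i - 1) + 1) =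
      Fintype.card F ^ ∑ i, d i := by
  obtain ⟨i₀, hi₀⟩ := Finite.exists_min d
  obtain ⟨k, hk⟩ : ∃ k, d i₀ = k + 1 := Nat.exists_eq_add_of_le' (hd i₀)
  have hpred := pow_sum_eq_sum_card_coprimeMonicTuple (F := F) (fun i => d i - 1) (i₀ := i₀)
    fun i => Nat.sub_le_sub_right (hi₀ i) 1
  rw [pow_sum_eq_sum_card_coprimeMonicTuple d hi₀, hk, sum_range_succ', pow_succ, hpred, hk,
    Nat.add_sub_cancel, sum_mul, add_comm]
  congr 1
  · refine sum_congr rfl fun e _ => ?_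
    simp_rw [Nat.sub_sub, add_comm 1 e, pow_succ, mul_right_comm]
  · simp

end Counting

end

theorem stmt_7_general (F : Type*) [Field F] [Fintype F] (m : ℕ) (hm : 2 ≤ m)
    (d : Fin m → ℕ) (hd : ∀ i, 1 ≤ d i) :
    Nat.card {f : Fin m → Polynomial F //
        (∀ i, (f i).Monic ∧ (f i).natDegree = d i) ∧
        (∀ p : Polynomial F, (∀ i, p ∣ f i) → IsUnit p)}
      = Fintype.card F ^ (∑ i, d i)
        - Fintype.card F ^ ((∑ i, d i) - (m - 1)) := by
  have : Nonempty (Fin m) := ⟨⟨0, by omega⟩⟩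
  have hm_le : ∑ _i : Fin m, 1 ≤ ∑ i, d i := sum_le_sum fun i _ => hd i
  have hexp : ∑ i, (d i - 1) + 1 = ∑ i, d i - (m - 1) := by
    rw [sum_tsub_distrib _ fun i _ => hd i]
    simp only [sum_const, card_univ, Fintype.card_fin, smul_eq_mul, mul_one] at hm_le ⊢
    omega
  rw [← hexp, ← card_coprimeMonicTuple_add_pow hd, Nat.add_sub_cancel]

/-- The number of `m`-tuples of monic polynomials over `F_q` of degrees
`1 ≤ d_1 ≤ … ≤ d_m` (`m ≥ 2`) with no common factor equals
`q^{d_1+⋯+d_m} − q^{d_1+⋯+d_m−m+1}`. -/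
theorem stmt_7 (F : Type*) [Field F] [Fintype F] (m : ℕ) (hm : 2 ≤ m)
    (d : Fin m → ℕ) (hmono : Monotone d) (hd : ∀ i, 1 ≤ d i) :
    Nat.card {f : Fin m → Polynomial F //
        (∀ i, (f i).Monic ∧ (f i).natDegree = d i) ∧
        (∀ p : Polynomial F, (∀ i, p ∣ f i) → IsUnit p)}
      = Fintype.card F ^ (∑ i, d i)
        - Fintype.card F ^ ((∑ i, d i) - (m - 1)) :=
  stmt_7_general F m hm d hd
end

section
/- Fix a finite field F_q, an integer N ≥ 1 and positive integers d_0,…,d_N. The number of (N+1)-tuples (f_0,…,f_N), where each f_i is a homogeneous polynomial of degree d_i in F_q[X,Y] (possibly zero), such that the f_i have no common zero in P^1 over an algebraic closure of F_q, equals (q^{N+1} − 1)·(q^{d_0+⋯+d_N} − q^{d_0+⋯+d_N − N}). -/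
/-!
Dehomogenizing at `Y = 1`, a form of degree `d` is a polynomial `p` of degree `≤ d`, and forms
`f_i` have no common zero on `P¹` iff the `p_i` are coprime (no common zero in the affine
chart; a common root in the algebraic closure is a root of the gcd) and some `p_i` has degree
exactly `d_i` (no common zero at infinity).

For bounds `deg p_i < n_i` call a tuple *tight* if some `p_i` reaches its bound; there are
`B(n) = q^(Σ n_i) - q^(Σ (n_i - 1))` of them. Let `C(n)` count the coprime tight tuples.
Factoring out the monic gcd, of degree `e`, gives `B(n) = Σ_e q^e C(n - e)`, and comparing this
with the same identity for `n - 1` gives `C(n) = B(n) - q B(n - 1)`, which for `n_i = d_i + 1` is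
the formula.
-/

open Polynomial

section DegreeLT

variable {R : Type*}

lemma Polynomial.Monic.mul_mem_degreeLT_iff [CommSemiring R] [Nontrivial R] {G : R[X]}
    (hG : G.Monic) {h : R[X]} {n : ℕ} :
    G * h ∈ degreeLT R n ↔ h ∈ degreeLT R (n - G.natDegree) := by
  rcases eq_or_ne h 0 with rfl | hh
  · simp
  rw [mem_degreeLT, mem_degreeLT, mul_comm, hG.degree_mul, degree_eq_natDegree hh,
    degree_eq_natDegree hG.ne_zero]
  norm_cast
  omega

lemma Polynomial.mem_degreeLT_iff_coeff_eq_zero [Semiring R] {p : R[X]} {n : ℕ}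
    (hp : p.natDegree ≤ n) :
    p ∈ degreeLT R n ↔ p.coeff n = 0 := by
  rw [mem_degreeLT, degree_lt_iff_coeff_zero]
  refine ⟨fun h => h n le_rfl, fun h m hm => ?_⟩
  rcases hm.eq_or_lt with rfl | hm
  · exact h
  · exact coeff_eq_zero_of_natDegree_lt (hp.trans_lt hm)

end DegreeLT

section Tuples

variable (F : Type*) [Field F] {ι : Type*}

/- `n i` is a strict bound on `deg p i`, so `n i = 0` forces `p i = 0`; hence truncated
subtraction `n i - e` is exactly the bound left for the cofactor after removing a factor of
degree `e`. -/
def boundedTuples (n : ι → ℕ) : Set (ι → F[X]) :=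
  Set.univ.pi fun i => degreeLT F (n i)

def tightTuples (n : ι → ℕ) : Set (ι → F[X]) :=
  boundedTuples F n \ boundedTuples F fun i => n i - 1

def coprimeTightTuples [Fintype ι] [DecidableEq F] (n : ι → ℕ) : Set (ι → F[X]) :=
  {p ∈ tightTuples F n | Finset.univ.gcd p = 1}

variable {F}

lemma boundedTuples_mono {m n : ι → ℕ} (h : ∀ i, m i ≤ n i) :
    boundedTuples F m ⊆ boundedTuples F n :=
  Set.pi_mono fun i _ => degreeLT_mono (h i)

lemma Polynomial.Monic.mul_mem_tightTuples_iff {G : F[X]} (hG : G.Monic) {h : ι → F[X]}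
    {n : ι → ℕ} :
    (fun i => G * h i) ∈ tightTuples F n ↔ h ∈ tightTuples F fun i => n i - G.natDegree := by
  simp only [tightTuples, boundedTuples, Set.mem_sdiff, Set.mem_univ_pi, SetLike.mem_coe,
    hG.mul_mem_degreeLT_iff, Nat.sub_right_comm]

lemma mem_tightTuples_add_one_iff {d : ι → ℕ} {p : ι → F[X]} :
    p ∈ tightTuples F (fun i => d i + 1) ↔
      (∀ i, (p i).natDegree ≤ d i) ∧ ∃ i, (p i).coeff (d i) ≠ 0 := by
  simp only [tightTuples, boundedTuples, Set.mem_sdiff, Set.mem_univ_pi, SetLike.mem_coe,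
    Nat.add_sub_cancel, degreeLT_succ_eq_degreeLE, mem_degreeLE, ← natDegree_le_iff_degree_le,
    not_forall]
  refine and_congr_right fun hp => exists_congr fun i => ?_
  rw [mem_degreeLT_iff_coeff_eq_zero (hp i)]

section Gcd

variable [Fintype ι] [DecidableEq F]

lemma Polynomial.Monic.gcd_mul_of_gcd_eq_one {G : F[X]} (hG : G.Monic) {h : ι → F[X]}
    (hh : Finset.univ.gcd h = 1) : Finset.univ.gcd (fun i => G * h i) = G := by
  rw [Finset.gcd_mul_left, hh, mul_one, hG.normalize_eq_self]

lemma exists_monic_mul_of_mem_tightTuples {n : ι → ℕ} {p : ι → F[X]}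
    (hp : p ∈ tightTuples F n) :
    ∃ G : F[X], G.Monic ∧ (∃ i, G.natDegree < n i) ∧
      ∃ h ∈ coprimeTightTuples F (fun i => n i - G.natDegree), p = fun i => G * h i := by
  obtain ⟨i₀, hi₀⟩ : ∃ i, p i ∉ degreeLT F (n i - 1) := by
    simpa [boundedTuples] using hp.2
  have hpi₀ : p i₀ ≠ 0 := fun h => hi₀ (h ▸ Submodule.zero_mem _)
  set G := Finset.univ.gcd p
  have hG : G.Monic := by
    have := monic_normalize fun h => hpi₀ (Finset.gcd_eq_zero_iff.1 h i₀ (Finset.mem_univ _))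
    rwa [Finset.normalize_gcd] at this
  obtain ⟨h, hph, hh⟩ := Finset.univ.extract_gcd p ⟨i₀, Finset.mem_univ _⟩
  have hp_eq : p = fun i => G * h i := funext fun i => hph i (Finset.mem_univ i)
  have hdeg : G.natDegree < n i₀ := by
    calc G.natDegree ≤ (p i₀).natDegree :=
          natDegree_le_of_dvd (Finset.gcd_dvd (Finset.mem_univ i₀)) hpi₀
      _ < n i₀ := (natDegree_lt_iff_degree_lt hpi₀).2 (mem_degreeLT.1 (hp.1 i₀ trivial))
  exact ⟨G, hG, ⟨i₀, hdeg⟩, h, ⟨hG.mul_mem_tightTuples_iff.1 (hp_eq ▸ hp), hh⟩, hp_eq⟩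

end Gcd

variable [Fintype F]

instance (n : ℕ) : Finite (degreeLT F n) :=
  .of_equiv _ (degreeLTEquiv F n).toEquiv.symm

lemma card_degreeLT (n : ℕ) : Nat.card (degreeLT F n) = Fintype.card F ^ n := by
  rw [Nat.card_congr (degreeLTEquiv F n).toEquiv, Nat.card_fun, Nat.card_eq_fintype_card,
    Nat.card_eq_fintype_card, Fintype.card_fin]

lemma card_monic_natDegree_eq (e : ℕ) :
    Nat.card {G : F[X] // G.Monic ∧ G.natDegree = e} = Fintype.card F ^ e := by
  rw [Nat.card_congr (monicEquivDegreeLT e), card_degreeLT]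

variable [Fintype ι]

lemma finite_boundedTuples (n : ι → ℕ) : (boundedTuples F n).Finite :=
  Set.Finite.pi fun i => Set.finite_coe_iff.1 (inferInstanceAs (Finite (degreeLT F (n i))))

lemma card_boundedTuples (n : ι → ℕ) :
    Nat.card (boundedTuples F n) = Fintype.card F ^ ∑ i, n i := by
  rw [boundedTuples, Nat.card_congr (Equiv.Set.univPi _), Nat.card_pi,
    ← Finset.prod_pow_eq_pow_sum]
  exact Finset.prod_congr rfl fun i _ => card_degreeLT (n i)

lemma card_tightTuples (n : ι → ℕ) :
    Nat.card (tightTuples F n) = Fintype.card F ^ ∑ i, n i - Fintype.card F ^ ∑ i, (n i - 1) := by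
  have hsub : boundedTuples F (fun i => n i - 1) ⊆ boundedTuples F n :=
    boundedTuples_mono fun i => Nat.sub_le _ _
  rw [tightTuples, Nat.card_coe_set_eq, Set.ncard_sdiff' hsub (finite_boundedTuples n)]
  simp only [← Nat.card_coe_set_eq, card_boundedTuples]

variable [DecidableEq F]

lemma card_tightTuples_eq_sum (n : ι → ℕ) (K : ℕ) (hK : ∀ i, n i ≤ K) :
    Nat.card (tightTuples F n) = ∑ e ∈ Finset.range (K + 1),
      Fintype.card F ^ e * Nat.card (coprimeTightTuples F fun i => n i - e) := by
  let Φ : (Σ e : Fin (K + 1), {G : F[X] // G.Monic ∧ G.natDegree = e} ×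
      coprimeTightTuples F (fun i => n i - e)) → tightTuples F n :=
    fun ⟨_, ⟨G, hG, hGe⟩, h, hh⟩ =>
      ⟨fun i => G * h i, hG.mul_mem_tightTuples_iff.2 (hGe ▸ hh.1)⟩
  have hΦ : Function.Bijective Φ := by
    constructor
    · rintro ⟨e, ⟨G, hG, hGe⟩, h, hh⟩ ⟨e', ⟨G', hG', hGe'⟩, h', hh'⟩ heq
      have hfun : (fun i => G * h i) = fun i => G' * h' i := congrArg Subtype.val heq
      obtain rfl : G = G' := by
        rw [← hG.gcd_mul_of_gcd_eq_one hh.2, hfun, hG'.gcd_mul_of_gcd_eq_one hh'.2]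
      obtain rfl : e = e' := Fin.ext (hGe.symm.trans hGe')
      obtain rfl : h = h' := funext fun i => mul_left_cancel₀ hG.ne_zero (congrFun hfun i)
      rfl
    · rintro ⟨p, hp⟩
      obtain ⟨G, hG, ⟨i, hi⟩, h, hh, rfl⟩ := exists_monic_mul_of_mem_tightTuples hp
      exact ⟨⟨⟨G.natDegree, by have := hK i; omega⟩, ⟨G, hG, rfl⟩, h, hh⟩, rfl⟩
  have (m : ι → ℕ) : Finite (coprimeTightTuples F m) :=
    ((finite_boundedTuples m).subset fun _ hp => hp.1.1).to_subtype
  have (e : ℕ) : Finite {G : F[X] // G.Monic ∧ G.natDegree = e} :=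
    .of_equiv _ (monicEquivDegreeLT e).symm
  rw [← Nat.card_eq_of_bijective Φ hΦ, Nat.card_sigma, ← Fin.sum_univ_eq_sum_range]
  simp only [Nat.card_prod, card_monic_natDegree_eq]

lemma card_coprimeTightTuples_add (n : ι → ℕ) :
    Nat.card (coprimeTightTuples F n) + Fintype.card F * Nat.card (tightTuples F fun i => n i - 1)
      = Nat.card (tightTuples F n) := by
  obtain ⟨K, hK⟩ : ∃ K, ∀ i, n i ≤ K + 1 :=
    ⟨∑ i, n i, fun i => (Finset.single_le_sum (fun j _ => Nat.zero_le (n j))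
      (Finset.mem_univ i)).trans (Nat.le_succ _)⟩
  rw [card_tightTuples_eq_sum n (K + 1) hK, Finset.sum_range_succ',
    card_tightTuples_eq_sum _ K fun i => Nat.sub_le_of_le_add (hK i), Finset.mul_sum]
  simp only [pow_zero, one_mul, Nat.sub_zero, Nat.sub_sub, pow_succ]
  rw [add_comm]
  congr 1
  refine Finset.sum_congr rfl fun e _ => ?_
  rw [add_comm 1 e]
  ring

end Tuples

section BinaryForms

variable {R A ι : Type*} [CommSemiring R] [CommSemiring A] [Algebra R A]

lemma Polynomial.aeval_homogenize_of_snd_eq_zero (p : R[X]) (n : ℕ) (a : A) :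
    MvPolynomial.aeval ![a, 0] (p.homogenize n) = algebraMap R A (p.coeff n) * a ^ n := by
  rw [homogenize, map_sum, Finset.sum_eq_single (n, 0)]
  · simp [MvPolynomial.aeval_monomial, Finsupp.prod_fintype]
  · rintro ⟨k, l⟩ hkl hne
    have hl : l ≠ 0 := by rintro rfl; simp_all
    simp [MvPolynomial.aeval_monomial, Finsupp.prod_fintype, hl]
  · simp

lemma Polynomial.aeval_homogenize_of_snd_ne_zero {K : Type*} [Field K] [Algebra R K] {p : R[X]}
    {n : ℕ} (hp : p.natDegree ≤ n) (a : K) {b : K} (hb : b ≠ 0) :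
    MvPolynomial.aeval ![a, b] (p.homogenize n) = aeval (a / b) p * b ^ n := by
  rw [MvPolynomial.aeval_def, MvPolynomial.eval₂_eq_eval_map, ← homogenize_map,
    eval_homogenize (natDegree_map_le.trans hp) _ hb]
  simp [eval_map_algebraMap]

lemma MvPolynomial.IsHomogeneous.natDegree_aeval_X_one_le {q : MvPolynomial (Fin 2) R} {n : ℕ}
    (hq : q.IsHomogeneous n) :
    (MvPolynomial.aeval ![(Polynomial.X : R[X]), 1] q).natDegree ≤ n := by
  rw [q.as_sum, map_sum]
  refine natDegree_sum_le_of_forall_le _ _ fun m hm => ?_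
  have hmn : m 0 + m 1 = n := by
    simpa [Finsupp.weight_apply, Finsupp.sum_fintype] using hq (MvPolynomial.mem_support_iff.1 hm)
  rw [MvPolynomial.aeval_monomial, Finsupp.prod_fintype _ _ (by simp), Fin.prod_univ_two]
  simp only [Matrix.cons_val_zero, Matrix.cons_val_one, one_pow, mul_one]
  exact (natDegree_C_mul_X_pow_le _ _).trans (by omega)

lemma injOn_homogenize (d : ι → ℕ) :
    Set.InjOn (fun (p : ι → R[X]) i => (p i).homogenize (d i))
      {p | ∀ i, (p i).natDegree ≤ d i} := by
  intro p hp p' hp' h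
  funext i
  rw [← aeval_homogenize_X_one (p i) (hp i), ← aeval_homogenize_X_one (p' i) (hp' i)]
  exact congrArg _ (congrFun h i)

end BinaryForms

section NoCommonZero

variable {F : Type*} [Field F] {ι : Type*} (K : Type*) [Field K] [Algebra F K]

def HasNoCommonZero (f : ι → MvPolynomial (Fin 2) F) : Prop :=
  ∀ a b : K, ¬(a = 0 ∧ b = 0) → ∃ i, MvPolynomial.aeval ![a, b] (f i) ≠ 0

variable [Fintype ι] [DecidableEq F]

theorem hasNoCommonZero_homogenize_iff [IsAlgClosed K] {d : ι → ℕ} {p : ι → F[X]}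
    (hp : ∀ i, (p i).natDegree ≤ d i) :
    HasNoCommonZero K (fun i => (p i).homogenize (d i)) ↔
      (∃ i, (p i).coeff (d i) ≠ 0) ∧ Finset.univ.gcd p = 1 := by
  constructor
  · intro h
    refine ⟨?_, ?_⟩
    · obtain ⟨i, hi⟩ := h 1 0 (by simp)
      refine ⟨i, fun hc => hi ?_⟩
      rw [aeval_homogenize_of_snd_eq_zero, hc, map_zero, zero_mul]
    · rw [← Finset.normalize_gcd, normalize_eq_one, isUnit_iff_degree_eq_zero]
      by_contra hdeg
      obtain ⟨r, hr⟩ := IsAlgClosed.exists_aeval_eq_zero K _ hdeg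
      obtain ⟨i, hi⟩ := h r 1 (by simp)
      rw [aeval_homogenize_of_eq_one (hp i) _ rfl] at hi
      exact hi (aeval_eq_zero_of_dvd_aeval_eq_zero (Finset.gcd_dvd (Finset.mem_univ i)) hr)
  · rintro ⟨⟨i₀, hi₀⟩, hgcd⟩ a b hab
    rcases eq_or_ne b 0 with rfl | hb
    · refine ⟨i₀, ?_⟩
      rw [aeval_homogenize_of_snd_eq_zero]
      exact mul_ne_zero ((_root_.map_ne_zero _).2 hi₀) (pow_ne_zero _ fun ha => hab ⟨ha, rfl⟩)
    · by_contra! hzero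
      have hdvd : minpoly F (a / b) ∣ Finset.univ.gcd p := Finset.dvd_gcd fun i _ =>
        minpoly.dvd F _ <| by
          simpa [aeval_homogenize_of_snd_ne_zero (hp i) a hb, hb] using hzero i
      rw [hgcd] at hdvd
      exact minpoly.not_isUnit F (a / b) (isUnit_of_dvd_one hdvd)

theorem image_homogenize_coprimeTightTuples [IsAlgClosed K] (d : ι → ℕ) :
    (fun p i => (p i).homogenize (d i)) '' coprimeTightTuples F (fun i => d i + 1) =
      {f | (∀ i, (f i).IsHomogeneous (d i)) ∧ HasNoCommonZero K f} := by
  ext f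
  constructor
  · rintro ⟨p, ⟨hpt, hgcd⟩, rfl⟩
    obtain ⟨hdeg, htop⟩ := mem_tightTuples_add_one_iff.1 hpt
    exact ⟨fun i => isHomogeneous_homogenize _,
      (hasNoCommonZero_homogenize_iff K hdeg).2 ⟨htop, hgcd⟩⟩
  · rintro ⟨hhom, hf⟩
    set p : ι → F[X] := fun i => MvPolynomial.aeval ![X, 1] (f i)
    have hdeg (i : ι) : (p i).natDegree ≤ d i := (hhom i).natDegree_aeval_X_one_le
    have hpf : (fun i => (p i).homogenize (d i)) = f :=
      funext fun i => homogenize_eq_of_isHomogeneous (hhom i) rfl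
    rw [← hpf, hasNoCommonZero_homogenize_iff K hdeg] at hf
    exact ⟨p, ⟨mem_tightTuples_add_one_iff.2 ⟨hdeg, hf.1⟩, hf.2⟩, hpf⟩

theorem card_coprimeTightTuples_add_one [Fintype F] (d : ι → ℕ) (hd : ∀ i, 1 ≤ d i) :
    Nat.card (coprimeTightTuples F fun i => d i + 1) =
      (Fintype.card F ^ Fintype.card ι - 1) *
        (Fintype.card F ^ ∑ i, d i - Fintype.card F ^ (∑ i, d i + 1 - Fintype.card ι)) := by
  have key := card_coprimeTightTuples_add (fun i => d i + 1) (F := F)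
  have hsub : ∑ i, (d i - 1) + Fintype.card ι = ∑ i, d i := by
    rw [← Finset.card_univ, Finset.card_eq_sum_ones, ← Finset.sum_add_distrib]
    exact Finset.sum_congr rfl fun i _ => Nat.sub_add_cancel (hd i)
  simp only [Nat.add_sub_cancel, card_tightTuples, Finset.sum_add_distrib, Finset.sum_const,
    Finset.card_univ, smul_eq_mul, mul_one] at key
  have hq : 1 ≤ Fintype.card F := Fintype.card_pos
  rw [← hsub] at key ⊢
  clear hsub
  generalize ∑ i, (d i - 1) = m at *
  generalize Fintype.card F = q at *
  generalize Fintype.card ι = s at *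
  generalize Nat.card (coprimeTightTuples F fun i => d i + 1) = C at *
  rcases s.eq_zero_or_pos with rfl | hs
  · simpa using key
  rw [show m + s + 1 - s = m + 1 by omega]
  have hmono {a b : ℕ} (hab : a ≤ b) : q ^ a ≤ q ^ b := Nat.pow_le_pow_right hq hab
  zify [hmono (by omega : m ≤ m + s), hmono (by omega : m + s ≤ m + s + s),
    hmono (by omega : m + 1 ≤ m + s), Nat.one_le_pow s q hq] at key ⊢
  linear_combination key

theorem card_homogeneous_hasNoCommonZero [Fintype F] [IsAlgClosed K] (d : ι → ℕ)
    (hd : ∀ i, 1 ≤ d i) :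
    Nat.card {f : ι → MvPolynomial (Fin 2) F //
        (∀ i, (f i).IsHomogeneous (d i)) ∧ HasNoCommonZero K f} =
      (Fintype.card F ^ Fintype.card ι - 1) *
        (Fintype.card F ^ ∑ i, d i - Fintype.card F ^ (∑ i, d i + 1 - Fintype.card ι)) := by
  have hinj : Set.InjOn (fun (p : ι → F[X]) i => (p i).homogenize (d i))
      (coprimeTightTuples F fun i => d i + 1) :=
    (injOn_homogenize d).mono fun _ hp => (mem_tightTuples_add_one_iff.1 hp.1).1
  rw [← card_coprimeTightTuples_add_one d hd, ← Nat.card_image_of_injOn hinj,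
    image_homogenize_coprimeTightTuples K d]
  rfl

end NoCommonZero

theorem stmt_10_general (F : Type*) [Field F] [Fintype F] (N : ℕ)
    (d : Fin (N + 1) → ℕ) (hd : ∀ i, 1 ≤ d i) :
    Nat.card {f : Fin (N + 1) → MvPolynomial (Fin 2) F //
        (∀ i, (f i).IsHomogeneous (d i)) ∧
        (∀ a b : AlgebraicClosure F, ¬(a = 0 ∧ b = 0) →
          ∃ i, (MvPolynomial.aeval ![a, b]) (f i) ≠ 0)}
      = (Fintype.card F ^ (N + 1) - 1) *
        (Fintype.card F ^ (∑ i, d i) - Fintype.card F ^ ((∑ i, d i) - N)) := by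
  classical
  have h := card_homogeneous_hasNoCommonZero (F := F) (AlgebraicClosure F) d hd
  rwa [Fintype.card_fin, Nat.add_sub_add_right] at h

/-- The number of `(N+1)`-tuples of binary forms over `F_q` of degrees `d_0,…,d_N ≥ 1`
(possibly zero) with no common zero on `P^1` over the algebraic closure equals
`(q^{N+1} − 1)·(q^{d_0+⋯+d_N} − q^{d_0+⋯+d_N−N})`. -/
theorem stmt_10 (F : Type*) [Field F] [Fintype F] (N : ℕ) (hN : 1 ≤ N)
    (d : Fin (N + 1) → ℕ) (hd : ∀ i, 1 ≤ d i) :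
    Nat.card {f : Fin (N + 1) → MvPolynomial (Fin 2) F //
        (∀ i, (f i).IsHomogeneous (d i)) ∧
        (∀ a b : AlgebraicClosure F, ¬(a = 0 ∧ b = 0) →
          ∃ i, (MvPolynomial.aeval ![a, b]) (f i) ≠ 0)}
      = (Fintype.card F ^ (N + 1) - 1) *
        (Fintype.card F ^ (∑ i, d i) - Fintype.card F ^ ((∑ i, d i) - N)) :=
  stmt_10_general F N d hd
end

section
/- Fix a finite field F_q, N ≥ 1 and n ≥ 1. The number of degree-n morphisms P^1 → P^N defined over F_q, i.e., the number of orbits of the diagonal scalar action of F_q* on (N+1)-tuples of homogeneous degree-n polynomials in F_q[X,Y] with no common zero in P^1(F̄_q), equals ((q^{N+1}−1)/(q−1)) · (q^{(N+1)n} − q^{(N+1)n−N}). -/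
/-!
Let `q = |F|` and `k = N + 1`. Dehomogenizing at `Y = 1` identifies `k`-tuples of degree-`n`
binary forms with no common zero on `P^1` with `k`-tuples of polynomials of degree `≤ n` that
have no common root (i.e. are coprime) and do not all have degree `< n` (no common zero at
infinity).

Writing a nonzero tuple of degree `≤ m` uniquely as a monic gcd of degree `d` times a coprime
tuple of degree `≤ m - d` gives `q^{k(m+1)} - 1 = ∑_{d ≤ m} q^d c_{m-d}`, where `c_m` counts the
coprime `k`-tuples of degree `≤ m`. Comparing this identity for `m` and `m + 1` yields
`c_m = q^{k(m+1)} - q^{km+1} + q - 1`, so there are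
`c_n - c_{n-1} = (q^k - 1)(q^{kn} - q^{k(n-1)+1})` coprime tuples of exact degree `n`.
Finally `F_q^×` acts freely on these tuples, so the orbit count is this number divided by `q - 1`.
-/

open Polynomial Finset

namespace Polynomial

section Degree

variable {R : Type*} [Semiring R]

theorem natDegree_le_iff_natDegree_le_succ_and_coeff_eq_zero (p : R[X]) (n : ℕ) :
    p.natDegree ≤ n ↔ p.natDegree ≤ n + 1 ∧ p.coeff (n + 1) = 0 := by
  simp only [natDegree_le_iff_coeff_eq_zero]
  refine ⟨fun h => ⟨fun N hN => h N (by omega), h _ (by omega)⟩, fun ⟨h, h'⟩ N hN => ?_⟩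
  obtain rfl | hN := (Nat.succ_le_of_lt hN).eq_or_lt
  exacts [h', h N hN]

theorem natDegree_mul_le_iff [NoZeroDivisors R] {g h : R[X]} {m : ℕ} (hg : g ≠ 0)
    (hgm : g.natDegree ≤ m) : (g * h).natDegree ≤ m ↔ h.natDegree ≤ m - g.natDegree := by
  rcases eq_or_ne h 0 with rfl | hh
  · simp
  · rw [natDegree_mul hg hh]
    omega

noncomputable def natDegreeLEEquiv (m : ℕ) : {p : R[X] // p.natDegree ≤ m} ≃ (Fin (m + 1) → R) :=
  (Equiv.subtypeEquivRight fun p => by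
    rw [degreeLT_succ_eq_degreeLE, mem_degreeLE, natDegree_le_iff_degree_le]).trans
    (degreeLTEquiv R (m + 1)).toEquiv

theorem card_monic_natDegree_eq [Nontrivial R] (d : ℕ) :
    Nat.card {g : R[X] // g.Monic ∧ g.natDegree = d} = Nat.card R ^ d := by
  rw [Nat.card_congr ((monicEquivDegreeLT d).trans (degreeLTEquiv R d).toEquiv), Nat.card_fun,
    Nat.card_fin]

end Degree

theorem gcd_eq_one_iff_forall_exists_aeval_ne_zero {F K ι : Type*} [Field F] [DecidableEq F]
    [Field K] [Algebra F K] [IsAlgClosed K] [Algebra.IsIntegral F K] (s : Finset ι)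
    (p : ι → F[X]) : s.gcd p = 1 ↔ ∀ a : K, ∃ i ∈ s, aeval a (p i) ≠ 0 := by
  constructor
  · intro hgcd a
    by_contra! hroot
    have hdvd : minpoly F a ∣ s.gcd p := Finset.dvd_gcd fun i hi => minpoly.dvd F a (hroot i hi)
    rw [hgcd] at hdvd
    exact (minpoly.irreducible (Algebra.IsIntegral.isIntegral a)).not_isUnit
      (isUnit_of_dvd_one hdvd)
  · intro hroot
    by_contra hgcd
    -- the gcd is normalized, so if it is not `1` it is not a constant
    have hdeg : ((s.gcd p).map (algebraMap F K)).degree ≠ 0 := by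
      rw [degree_map, ne_eq, ← isUnit_iff_degree_eq_zero, ← normalize_eq_one,
        Finset.normalize_gcd]
      exact hgcd
    obtain ⟨a, ha⟩ := IsAlgClosed.exists_root _ hdeg
    obtain ⟨i, hi, hne⟩ := hroot a
    exact hne (aeval_eq_zero_of_dvd_aeval_eq_zero (gcd_dvd hi)
      (by rwa [aeval_def, eval₂_eq_eval_map]))

section Homogenize

variable {R : Type*} [CommSemiring R]

theorem aeval_homogenize_of_eq_zero {A : Type*} [CommSemiring A] [Algebra R A] (p : R[X])
    (n : ℕ) (x : Fin 2 → A) (hx : x 1 = 0) :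
    MvPolynomial.aeval x (p.homogenize n) = algebraMap R A (p.coeff n) * x 0 ^ n := by
  rw [MvPolynomial.aeval_def]
  induction p using Polynomial.induction_on' with
  | add p q hp hq => simp [hp, hq, add_mul]
  | monomial k c =>
    rcases lt_trichotomy k n with hkn | rfl | hnk
    · simp [homogenize_monomial hkn.le, coeff_monomial, hkn.ne, hx, Nat.sub_ne_zero_of_lt hkn]
    · simp [homogenize_monomial le_rfl]
    · simp [homogenize_monomial_of_lt hnk, coeff_monomial, hnk.ne']

theorem aeval_homogenize_of_ne_zero {K : Type*} [Semifield K] [Algebra R K] {p : R[X]} {n : ℕ}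
    (hp : p.natDegree ≤ n) (x : Fin 2 → K) (hx : x 1 ≠ 0) :
    MvPolynomial.aeval x (p.homogenize n) = aeval (x 0 / x 1) p * x 1 ^ n := by
  rw [MvPolynomial.aeval_def, ← MvPolynomial.eval_map, ← homogenize_map,
    eval_homogenize (natDegree_map_le.trans hp) x hx, eval_map_algebraMap]

theorem natDegree_aeval_X_one_le {q : MvPolynomial (Fin 2) R} {n : ℕ}
    (hq : q.IsHomogeneous n) : (MvPolynomial.aeval ![(X : R[X]), 1] q).natDegree ≤ n := by
  rw [q.as_sum, map_sum]
  refine natDegree_sum_le_of_forall_le _ _ fun d hd => ?_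
  have hdn : d 0 + d 1 = n := by
    simpa [Finsupp.weight_apply, Finsupp.sum_fintype, Fin.sum_univ_two] using
      hq (MvPolynomial.mem_support_iff.mp hd)
  simp only [MvPolynomial.aeval_monomial, Finsupp.prod_fintype _ _ (fun i => pow_zero _),
    Fin.prod_univ_two, Matrix.cons_val_zero, Matrix.cons_val_one, one_pow, mul_one,
    ← C_eq_algebraMap]
  exact (natDegree_C_mul_X_pow_le _ _).trans (by omega)

theorem forall_exists_aeval_homogenize_ne_zero_iff {F K ι : Type*} [Field F] [Field K]
    [Algebra F K] {p : ι → F[X]} {n : ℕ} (hp : ∀ i, (p i).natDegree ≤ n) :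
    (∀ a b : K, ¬(a = 0 ∧ b = 0) → ∃ i, MvPolynomial.aeval ![a, b] ((p i).homogenize n) ≠ 0) ↔
      (∀ a : K, ∃ i, aeval a (p i) ≠ 0) ∧ ∃ i, (p i).coeff n ≠ 0 := by
  constructor
  · intro h
    refine ⟨fun a => ?_, ?_⟩
    · obtain ⟨i, hi⟩ := h a 1 (by simp)
      exact ⟨i, by rwa [aeval_homogenize_of_eq_one (hp i) _ rfl] at hi⟩
    · obtain ⟨i, hi⟩ := h 1 0 (by simp)
      exact ⟨i, by simpa [aeval_homogenize_of_eq_zero] using hi⟩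
  · rintro ⟨hroot, i, hi⟩ a b hab
    by_cases hb : b = 0
    · have ha : a ≠ 0 := fun ha => hab ⟨ha, hb⟩
      refine ⟨i, ?_⟩
      rw [aeval_homogenize_of_eq_zero _ _ _ (by simpa using hb)]
      exact mul_ne_zero ((map_ne_zero_iff _ (algebraMap F K).injective).mpr hi) (pow_ne_zero _ ha)
    · obtain ⟨j, hj⟩ := hroot (a / b)
      refine ⟨j, ?_⟩
      rw [aeval_homogenize_of_ne_zero (hp j) _ (by simpa using hb)]
      simpa [hb] using hj

end Homogenize

section GcdOfTuples

variable {F ι : Type*} [Field F] [DecidableEq F] [Fintype ι]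

theorem monic_gcd {p : ι → F[X]} (hp : p ≠ 0) : (univ.gcd p).Monic := by
  have hg : univ.gcd p ≠ 0 := fun h =>
    hp (_root_.funext fun i => Finset.gcd_eq_zero_iff.mp h i (mem_univ i))
  simpa only [Finset.normalize_gcd] using monic_normalize hg

theorem gcd_mul_div_gcd {p : ι → F[X]} (hp : p ≠ 0) (i : ι) :
    univ.gcd p * (p i / univ.gcd p) = p i :=
  EuclideanDomain.mul_div_cancel' (monic_gcd hp).ne_zero (gcd_dvd (mem_univ i))

theorem gcd_div_gcd_eq_one {p : ι → F[X]} (hp : p ≠ 0) :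
    univ.gcd (fun i => p i / univ.gcd p) = 1 := by
  obtain ⟨i, hi⟩ := Function.ne_iff.mp hp
  exact extract_gcd' p _ ⟨i, mem_univ i, hi⟩ fun i _ => (gcd_mul_div_gcd hp i).symm

theorem gcd_mul_left_of_monic {g : F[X]} {h : ι → F[X]} (hg : g.Monic) (hh : univ.gcd h = 1) :
    univ.gcd (fun i => g * h i) = g := by
  rw [Finset.gcd_mul_left, hh, mul_one, hg.normalize_eq_self]

theorem ne_zero_of_gcd_eq_one {h : ι → F[X]} (hh : univ.gcd h = 1) : h ≠ 0 := by
  rintro rfl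
  exact zero_ne_one ((Finset.gcd_eq_zero_iff.mpr fun _ _ => rfl).symm.trans hh)

end GcdOfTuples

section Counting

variable (F ι : Type*) [Field F]

def tuplesDegreeLE (m : ℕ) : Set (ι → F[X]) := {p | ∀ i, (p i).natDegree ≤ m}

def coprimeTuples [DecidableEq F] [Fintype ι] (m : ℕ) : Set (ι → F[X]) :=
  {p | p ∈ tuplesDegreeLE F ι m ∧ univ.gcd p = 1}

def coprimeTuplesOfDegree [DecidableEq F] [Fintype ι] (n : ℕ) : Set (ι → F[X]) :=
  {p | p ∈ coprimeTuples F ι n ∧ ∃ i, (p i).coeff n ≠ 0}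

noncomputable def tuplesDegreeLEEquiv (m : ℕ) : tuplesDegreeLE F ι m ≃ (ι → Fin (m + 1) → F) :=
  (Equiv.subtypePiEquivPi (p := fun _ (q : F[X]) => q.natDegree ≤ m)).trans
    (Equiv.piCongrRight fun _ => natDegreeLEEquiv m)

instance [Finite F] [Finite ι] (m : ℕ) : Finite (tuplesDegreeLE F ι m) :=
  Finite.of_equiv _ (tuplesDegreeLEEquiv F ι m).symm

instance [DecidableEq F] [Fintype ι] [Finite F] (m : ℕ) : Finite (coprimeTuples F ι m) :=
  Finite.Set.subset _ fun _ hp => hp.1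

theorem card_tuplesDegreeLE [Fintype ι] (m : ℕ) :
    Nat.card (tuplesDegreeLE F ι m) = Nat.card F ^ (Fintype.card ι * (m + 1)) := by
  rw [Nat.card_congr (tuplesDegreeLEEquiv F ι m), Nat.card_fun, Nat.card_fun, Nat.card_fin,
    Nat.card_eq_fintype_card (α := ι), ← pow_mul, mul_comm]

theorem card_tuplesDegreeLE_diff_zero [Fintype ι] [Finite F] (m : ℕ) :
    Nat.card ↥(tuplesDegreeLE F ι m \ {0}) + 1 = Nat.card F ^ (Fintype.card ι * (m + 1)) := by
  rw [← card_tuplesDegreeLE, Nat.card_coe_set_eq, Nat.card_coe_set_eq,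
    Set.ncard_sdiff_singleton_add_one (show (0 : ι → F[X]) ∈ tuplesDegreeLE F ι m from
      fun _ => natDegree_zero.trans_le (Nat.zero_le m))]

variable {F ι} [DecidableEq F] [Fintype ι]

theorem natDegree_gcd_le {p : ι → F[X]} {m : ℕ} (hp : p ∈ tuplesDegreeLE F ι m) (hp0 : p ≠ 0) :
    (univ.gcd p).natDegree ≤ m := by
  obtain ⟨i, hi⟩ := Function.ne_iff.mp hp0
  exact (natDegree_le_of_dvd (gcd_dvd (mem_univ i)) hi).trans (hp i)

theorem natDegree_div_gcd_le {p : ι → F[X]} {m : ℕ} (hp : p ∈ tuplesDegreeLE F ι m)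
    (hp0 : p ≠ 0) (i : ι) : (p i / univ.gcd p).natDegree ≤ m - (univ.gcd p).natDegree := by
  rw [← natDegree_mul_le_iff (monic_gcd hp0).ne_zero (natDegree_gcd_le hp hp0),
    gcd_mul_div_gcd hp0]
  exact hp i

noncomputable def gcdFiberEquiv {m d : ℕ} (hd : d ≤ m) :
    {p : ↥(tuplesDegreeLE F ι m \ {0}) // (univ.gcd (p : ι → F[X])).natDegree = d} ≃
      {g : F[X] // g.Monic ∧ g.natDegree = d} × coprimeTuples F ι (m - d) where
  toFun p :=
    (⟨univ.gcd p.1.1, monic_gcd p.1.2.2, p.2⟩,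
      ⟨fun i => p.1.1 i / univ.gcd p.1.1,
        fun i => by simpa only [p.2] using natDegree_div_gcd_le p.1.2.1 p.1.2.2 i,
        gcd_div_gcd_eq_one p.1.2.2⟩)
  invFun gh :=
    ⟨⟨fun i => gh.1.1 * gh.2.1 i,
        fun i => by
          rw [natDegree_mul_le_iff gh.1.2.1.ne_zero (gh.1.2.2.trans_le hd), gh.1.2.2]
          exact gh.2.2.1 i,
        fun h0 => by
          obtain ⟨i, hi⟩ := Function.ne_iff.mp (ne_zero_of_gcd_eq_one gh.2.2.2)
          exact mul_ne_zero gh.1.2.1.ne_zero hi (congrFun h0 i)⟩,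
      by simp only [gcd_mul_left_of_monic gh.1.2.1 gh.2.2.2, gh.1.2.2]⟩
  left_inv p := Subtype.ext <| Subtype.ext <| _root_.funext <| gcd_mul_div_gcd p.1.2.2
  right_inv gh := by
    have hgcd := gcd_mul_left_of_monic gh.1.2.1 gh.2.2.2
    refine Prod.ext (Subtype.ext hgcd) (Subtype.ext (_root_.funext fun i => ?_))
    simp only [hgcd, mul_div_cancel_left₀ _ gh.1.2.1.ne_zero]

theorem coprimeTuples_diff_coprimeTuplesOfDegree (n : ℕ) :
    coprimeTuples F ι (n + 1) \ coprimeTuplesOfDegree F ι (n + 1) = coprimeTuples F ι n := by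
  ext p
  simp only [coprimeTuplesOfDegree, coprimeTuples, tuplesDegreeLE, Set.mem_sdiff,
    Set.mem_ofPred_eq, natDegree_le_iff_natDegree_le_succ_and_coeff_eq_zero _ n, forall_and,
    not_and, not_exists, not_not]
  tauto

variable [Finite F]

theorem card_tuplesDegreeLE_diff_zero_eq_sum (m : ℕ) :
    Nat.card ↥(tuplesDegreeLE F ι m \ {0}) =
      ∑ d ∈ range (m + 1), Nat.card F ^ d * Nat.card (coprimeTuples F ι (m - d)) := by
  let gcdDegree (p : ↥(tuplesDegreeLE F ι m \ {0})) : Fin (m + 1) :=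
    ⟨(univ.gcd (p : ι → F[X])).natDegree, Nat.lt_succ_of_le (natDegree_gcd_le p.2.1 p.2.2)⟩
  rw [← Nat.card_congr (Equiv.sigmaFiberEquiv gcdDegree), Nat.card_sigma,
    ← Fin.sum_univ_eq_sum_range]
  refine Fintype.sum_congr _ _ fun d => ?_
  rw [← card_monic_natDegree_eq, ← Nat.card_prod, ← Nat.card_congr (gcdFiberEquiv d.is_le)]
  exact Nat.card_congr (Equiv.subtypeEquivRight fun p => Fin.ext_iff)

theorem card_tuplesDegreeLE_succ_diff_zero (m : ℕ) :
    Nat.card ↥(tuplesDegreeLE F ι (m + 1) \ {0}) =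
      Nat.card (coprimeTuples F ι (m + 1)) + Nat.card F * Nat.card ↥(tuplesDegreeLE F ι m \ {0}) := by
  rw [card_tuplesDegreeLE_diff_zero_eq_sum, card_tuplesDegreeLE_diff_zero_eq_sum,
    sum_range_succ', mul_sum, add_comm]
  simp [pow_succ, mul_assoc, mul_comm]

theorem card_coprimeTuples (m : ℕ) :
    (Nat.card (coprimeTuples F ι m) : ℤ) =
      Nat.card F ^ (Fintype.card ι * (m + 1)) - Nat.card F ^ (Fintype.card ι * m + 1)
        + Nat.card F - 1 := by
  cases m with
  | zero =>
    have h0 := card_tuplesDegreeLE_diff_zero F ι 0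
    rw [card_tuplesDegreeLE_diff_zero_eq_sum, sum_range_one, pow_zero, one_mul] at h0
    zify at h0
    linear_combination h0
  | succ m =>
    have h1 := card_tuplesDegreeLE_diff_zero F ι (m + 1)
    have h0 := card_tuplesDegreeLE_diff_zero F ι m
    rw [card_tuplesDegreeLE_succ_diff_zero] at h1
    zify at h1 h0
    linear_combination h1 - (Nat.card F : ℤ) * h0

theorem card_coprimeTuplesOfDegree (n : ℕ) :
    (Nat.card (coprimeTuplesOfDegree F ι (n + 1)) : ℤ) =
      (Nat.card F ^ Fintype.card ι - 1) *
        (Nat.card F ^ (Fintype.card ι * (n + 1)) - Nat.card F ^ (Fintype.card ι * n + 1)) := by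
  have hsplit := Set.ncard_sdiff_add_ncard_of_subset (s := coprimeTuplesOfDegree F ι (n + 1))
    (t := coprimeTuples F ι (n + 1)) (fun _ hp => hp.1) (Set.toFinite _)
  rw [coprimeTuples_diff_coprimeTuplesOfDegree, ← Nat.card_coe_set_eq, ← Nat.card_coe_set_eq,
    ← Nat.card_coe_set_eq] at hsplit
  zify at hsplit
  rw [card_coprimeTuples, card_coprimeTuples] at hsplit
  linear_combination hsplit

end Counting

end Polynomial

theorem MulAction.card_eq_card_quotient_mul_card {G α : Type*} [Group G] [MulAction G α]
    (s : Setoid α) (hs : ∀ x y, s x y ↔ ∃ g : G, g • x = y)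
    (hfree : ∀ x : α, MulAction.stabilizer G x = ⊥) :
    Nat.card α = Nat.card (Quotient s) * Nat.card G := by
  obtain rfl : s = MulAction.orbitRel G α := Setoid.ext fun x y => by
    rw [hs, MulAction.orbitRel_apply, MulAction.mem_orbit_iff]
    exact ⟨fun ⟨g, hg⟩ => ⟨g⁻¹, by rw [← hg, inv_smul_smul]⟩,
      fun ⟨g, hg⟩ => ⟨g⁻¹, by rw [← hg, inv_smul_smul]⟩⟩
  rw [Nat.card_congr (MulAction.selfEquivOrbitsQuotientProd hfree), Nat.card_prod]

section BasepointFreeForms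

open MvPolynomial

variable (F K ι : Type*) [Field F] [Field K] [Algebra F K]

def basepointFreeForms (n : ℕ) : SubMulAction Fˣ (ι → MvPolynomial (Fin 2) F) where
  carrier := {f | (∀ i, (f i).IsHomogeneous n) ∧
    ∀ a b : K, ¬(a = 0 ∧ b = 0) → ∃ i, aeval ![a, b] (f i) ≠ 0}
  smul_mem' u f hf :=
    ⟨fun i => by
      rw [Pi.smul_apply, Units.smul_def, MvPolynomial.smul_eq_C_mul]
      exact (hf.1 i).C_mul _,
    fun a b hab => by
      obtain ⟨i, hi⟩ := hf.2 a b hab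
      exact ⟨i, by simpa [Units.smul_def, MvPolynomial.smul_eq_C_mul] using hi⟩⟩

variable {F K ι} {n : ℕ}

theorem mem_basepointFreeForms {f : ι → MvPolynomial (Fin 2) F} :
    f ∈ basepointFreeForms F K ι n ↔ (∀ i, (f i).IsHomogeneous n) ∧
      ∀ a b : K, ¬(a = 0 ∧ b = 0) → ∃ i, aeval ![a, b] (f i) ≠ 0 :=
  Iff.rfl

theorem stabilizer_basepointFreeForms (f : basepointFreeForms F K ι n) :
    MulAction.stabilizer Fˣ f = ⊥ := by
  rw [SubMulAction.stabilizer_of_subMul, Module.stabilizer_units_eq_bot_of_ne_zero]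
  obtain ⟨i, hi⟩ := f.2.2 1 0 (by simp)
  exact fun h => hi (by simp [h])

variable [DecidableEq F] [Fintype ι] [IsAlgClosed K] [Algebra.IsIntegral F K]

theorem homogenize_mem_basepointFreeForms_iff {p : ι → F[X]} (hp : p ∈ tuplesDegreeLE F ι n) :
    (fun i => (p i).homogenize n) ∈ basepointFreeForms F K ι n ↔
      p ∈ coprimeTuplesOfDegree F ι n := by
  rw [mem_basepointFreeForms, forall_exists_aeval_homogenize_ne_zero_iff hp]
  simp only [coprimeTuplesOfDegree, coprimeTuples, Set.mem_ofPred_eq,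
    gcd_eq_one_iff_forall_exists_aeval_ne_zero (K := K), isHomogeneous_homogenize, implies_true,
    mem_univ, true_and, hp]

theorem bijOn_homogenize :
    Set.BijOn (fun p i => (p i).homogenize n) (coprimeTuplesOfDegree F ι n)
      (basepointFreeForms F K ι n) := by
  refine ⟨fun p hp => (homogenize_mem_basepointFreeForms_iff hp.1.1).mpr hp,
    fun p hp q hq hpq => _root_.funext fun i => ?_, fun f hf => ?_⟩
  · have hi : (p i).homogenize n = (q i).homogenize n := congrFun hpq i
    rw [← aeval_homogenize_X_one (p i) (hp.1.1 i), hi, aeval_homogenize_X_one (q i) (hq.1.1 i)]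
  · let p i := aeval ![(X : F[X]), 1] (f i)
    have hp : p ∈ tuplesDegreeLE F ι n := fun i => natDegree_aeval_X_one_le (hf.1 i)
    have hfp : (fun i => (p i).homogenize n) = f :=
      _root_.funext fun i => homogenize_eq_of_isHomogeneous (hf.1 i) rfl
    exact ⟨p, (homogenize_mem_basepointFreeForms_iff hp).mp (hfp ▸ hf), hfp⟩

end BasepointFreeForms

theorem stmt_11_general (F : Type*) [Field F] [Fintype F] (N n : ℕ) (hn : 1 ≤ n)
    (s : Setoid {f : Fin (N + 1) → MvPolynomial (Fin 2) F //
        (∀ i, (f i).IsHomogeneous n) ∧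
        (∀ a b : AlgebraicClosure F, ¬(a = 0 ∧ b = 0) →
          ∃ i, (MvPolynomial.aeval ![a, b]) (f i) ≠ 0)})
    (hs : ∀ f g, s.r f g ↔ ∃ u : Fˣ, ∀ i, (g : Fin (N + 1) → MvPolynomial (Fin 2) F) i
        = (u : F) • (f : Fin (N + 1) → MvPolynomial (Fin 2) F) i) :
    (Nat.card (Quotient s) : ℚ)
      = (((Fintype.card F : ℚ) ^ (N + 1) - 1) / ((Fintype.card F : ℚ) - 1)) *
        ((Fintype.card F : ℚ) ^ ((N + 1) * n)
          - (Fintype.card F : ℚ) ^ ((N + 1) * n - N)) := by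
  classical
  obtain ⟨n, rfl⟩ := Nat.exists_eq_add_of_le' hn
  have horbits : Nat.card (basepointFreeForms F (AlgebraicClosure F) (Fin (N + 1)) (n + 1)) =
      Nat.card (Quotient s) * Nat.card Fˣ :=
    MulAction.card_eq_card_quotient_mul_card
      (α := basepointFreeForms F (AlgebraicClosure F) (Fin (N + 1)) (n + 1)) s
      (fun f g => (hs f g).trans <| exists_congr fun u => by
        simp only [Subtype.ext_iff, funext_iff, SubMulAction.val_smul, Pi.smul_apply,
          Units.smul_def, eq_comm])
      stabilizer_basepointFreeForms
  have hforms : Nat.card (coprimeTuplesOfDegree F (Fin (N + 1)) (n + 1)) =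
      Nat.card (basepointFreeForms F (AlgebraicClosure F) (Fin (N + 1)) (n + 1)) :=
    Nat.card_congr bijOn_homogenize.equiv
  have hcount := card_coprimeTuplesOfDegree (F := F) (ι := Fin (N + 1)) n
  have hq : 1 < Fintype.card F := Fintype.one_lt_card
  rw [hforms, horbits, Nat.card_units, Nat.card_eq_fintype_card (α := F), Fintype.card_fin,
    Nat.cast_mul, Nat.cast_sub hq.le] at hcount
  rw [show (N + 1) * (n + 1) - N = (N + 1) * n + 1 by rw [Nat.mul_succ]; omega,
    div_mul_eq_mul_div, eq_div_iff (by rw [sub_ne_zero]; exact_mod_cast hq.ne')]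
  exact_mod_cast hcount

/-- The number of degree-`n` morphisms `P^1 → P^N` over `F_q`, i.e. of orbits of the
diagonal scaling action of `Fˣ` on `(N+1)`-tuples of degree-`n` binary forms with no
common zero over the algebraic closure, equals
`((q^{N+1}−1)/(q−1)) · (q^{(N+1)n} − q^{(N+1)n−N})`. -/
theorem stmt_11 (F : Type*) [Field F] [Fintype F] (N n : ℕ) (hN : 1 ≤ N) (hn : 1 ≤ n)
    (s : Setoid {f : Fin (N + 1) → MvPolynomial (Fin 2) F //
        (∀ i, (f i).IsHomogeneous n) ∧
        (∀ a b : AlgebraicClosure F, ¬(a = 0 ∧ b = 0) →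
          ∃ i, (MvPolynomial.aeval ![a, b]) (f i) ≠ 0)})
    (hs : ∀ f g, s.r f g ↔ ∃ u : Fˣ, ∀ i, (g : Fin (N + 1) → MvPolynomial (Fin 2) F) i
        = (u : F) • (f : Fin (N + 1) → MvPolynomial (Fin 2) F) i) :
    (Nat.card (Quotient s) : ℚ)
      = (((Fintype.card F : ℚ) ^ (N + 1) - 1) / ((Fintype.card F : ℚ) - 1)) *
        ((Fintype.card F : ℚ) ^ ((N + 1) * n)
          - (Fintype.card F : ℚ) ^ ((N + 1) * n - N)) :=
  stmt_11_general F N n hn s hs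
end

section
/- Fix a finite field F_q, N ≥ 0 and positive integers λ_0,…,λ_N. Consider the action of F_q* on F_q^{N+1} ∖ {0} given by u·(x_0,…,x_N) = (u^{λ_0}x_0,…,u^{λ_N}x_N). Then the number of orbits equals ∑_{r | q−1} φ(r)·(q^{n_r} − 1)/(q−1), where n_r = #{i : r divides λ_i} and φ is Euler's totient function. -/
open MulAction Finset

section WPdef

/-- The punctured affine space as a carrier for the weighted scaling action. -/
def WP (F : Type*) [Field F] (N : ℕ) (_lam : Fin (N + 1) → ℕ) : Type _ :=
  {x : Fin (N + 1) → F // x ≠ 0}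

variable (F : Type*) [Field F] (N : ℕ) (lam : Fin (N + 1) → ℕ)

instance : MulAction Fˣ (WP F N lam) where
  smul u x := ⟨fun i => (u : F) ^ lam i * x.1 i, by
    intro h
    apply x.2
    funext i
    have h1 := congrFun h i
    simp only [Pi.zero_apply] at h1 ⊢
    rcases mul_eq_zero.mp h1 with h' | h'
    · exact absurd h' (pow_ne_zero _ u.ne_zero)
    · exact h'⟩
  one_smul x := Subtype.ext (funext fun i => by
    show ((1 : Fˣ) : F) ^ lam i * x.1 i = x.1 i
    simp)
  mul_smul u v x := Subtype.ext (funext fun i => by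
    show ((u * v : Fˣ) : F) ^ lam i * x.1 i = (u : F) ^ lam i * ((v : F) ^ lam i * x.1 i)
    push_cast
    ring)

instance [Fintype F] [DecidableEq F] : Fintype (WP F N lam) :=
  inferInstanceAs (Fintype {x : Fin (N + 1) → F // x ≠ 0})

lemma wp_smul_apply (u : Fˣ) (x : WP F N lam) (i : Fin (N + 1)) :
    (u • x).1 i = (u : F) ^ lam i * x.1 i := rfl

end WPdef

section Counting

variable {F : Type*} [Field F] [Fintype F] [DecidableEq F] {N : ℕ} {lam : Fin (N + 1) → ℕ}

lemma pow_lam_eq_one_iff (u : Fˣ) (n : ℕ) : (u : F) ^ n = 1 ↔ orderOf u ∣ n := by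
  rw [orderOf_dvd_iff_pow_eq_one, ← Units.val_pow_eq_pow_val, Units.val_eq_one]

lemma wp_mem_fixedBy_iff (u : Fˣ) (x : WP F N lam) :
    x ∈ fixedBy (WP F N lam) u ↔ ∀ i, ¬ orderOf u ∣ lam i → x.1 i = 0 := by
  rw [mem_fixedBy]
  constructor
  · intro hx i hi
    have h1 : (u : F) ^ lam i * x.1 i = x.1 i :=
      congrFun (congrArg Subtype.val hx) i
    by_contra h0
    exact hi ((pow_lam_eq_one_iff u (lam i)).mp
      (mul_right_cancel₀ h0 (by rw [h1, one_mul])))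
  · intro h
    refine Subtype.ext (funext fun i => ?_)
    by_cases hi : orderOf u ∣ lam i
    · rw [wp_smul_apply, (pow_lam_eq_one_iff u (lam i)).mpr hi, one_mul]
    · rw [wp_smul_apply, h i hi, mul_zero]

lemma card_fixedBy_wp (u : Fˣ) [Fintype (fixedBy (WP F N lam) u)] :
    Fintype.card (fixedBy (WP F N lam) u)
      = Fintype.card F ^ (Finset.univ.filter fun i => orderOf u ∣ lam i).card - 1 := by
  classical
  let σ := {i : Fin (N + 1) // orderOf u ∣ lam i}
  let e : fixedBy (WP F N lam) u ≃ {v : σ → F // v ≠ 0} :=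
  { toFun := fun x => ⟨fun i => x.1.1 i.1, fun h0 => x.1.2 (funext fun i => by
      by_cases hi : orderOf u ∣ lam i
      · exact congrFun h0 ⟨i, hi⟩
      · exact (wp_mem_fixedBy_iff u x.1).mp x.2 i hi)⟩
    invFun := fun v => ⟨⟨fun i => if hi : orderOf u ∣ lam i then v.1 ⟨i, hi⟩ else 0,
        fun h0 => v.2 (funext fun i => by
          have h1 := congrFun h0 i.1
          simpa [i.2] using h1)⟩,
      (wp_mem_fixedBy_iff u _).mpr fun i hi => by simp [hi]⟩
    left_inv := fun x => Subtype.ext (Subtype.ext (funext fun i => by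
      by_cases hi : orderOf u ∣ lam i
      · simp [hi]
      · simp [hi, (wp_mem_fixedBy_iff u x.1).mp x.2 i hi]))
    right_inv := fun v => Subtype.ext (funext fun i => by simp [i.2]) }
  rw [Fintype.card_congr e]
  have h1 : Fintype.card {v : σ → F // v = 0} = 1 := Fintype.card_subtype_eq _
  have h2 := Fintype.card_subtype_compl (fun v : σ → F => v = 0)
  simp only [h1] at h2
  have h3 : Fintype.card {v : σ → F // ¬ v = 0} = Fintype.card {v : σ → F // v ≠ 0} := rfl
  rw [← h3, h2, Fintype.card_fun, Fintype.card_subtype]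

lemma wp_nat_count :
    Nat.card (Quotient (orbitRel Fˣ (WP F N lam))) * (Fintype.card F - 1)
      = ∑ r ∈ (Fintype.card F - 1).divisors,
          Nat.totient r *
            (Fintype.card F ^ (Finset.univ.filter fun i => r ∣ lam i).card - 1) := by
  classical
  letI : ∀ a : Fˣ, Fintype (fixedBy (WP F N lam) a) := fun a => Fintype.ofFinite _
  letI : Fintype (Quotient (orbitRel Fˣ (WP F N lam))) := Fintype.ofFinite _
  have hb := MulAction.sum_card_fixedBy_eq_card_orbits_mul_card_group Fˣ (WP F N lam)
  have hcard : Fintype.card Fˣ = Fintype.card F - 1 := by rw [Fintype.card_units]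
  have hne : Fintype.card F - 1 ≠ 0 := by
    have : 1 < Fintype.card F := Fintype.one_lt_card
    omega
  rw [hcard] at hb
  rw [Nat.card_eq_fintype_card, ← hb]
  have hmaps : ∀ u : Fˣ, u ∈ (Finset.univ : Finset Fˣ) →
      orderOf u ∈ (Fintype.card F - 1).divisors := by
    intro u _
    rw [Nat.mem_divisors, ← hcard]
    exact ⟨orderOf_dvd_card, by rw [hcard]; exact hne⟩
  rw [← Finset.sum_fiberwise_of_maps_to hmaps
    (fun u : Fˣ => Fintype.card (fixedBy (WP F N lam) u))]
  refine Finset.sum_congr rfl fun r hr => ?_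
  have hinner : ∀ u ∈ Finset.univ.filter (fun u : Fˣ => orderOf u = r),
      Fintype.card (fixedBy (WP F N lam) u)
        = Fintype.card F ^ (Finset.univ.filter fun i => r ∣ lam i).card - 1 := by
    intro u hu
    rw [Finset.mem_filter] at hu
    rw [card_fixedBy_wp u, hu.2]
  rw [Finset.sum_congr rfl hinner, Finset.sum_const, smul_eq_mul]
  congr 1
  have hdvd : r ∣ Fintype.card Fˣ := by
    rw [hcard]; exact (Nat.mem_divisors.mp hr).1
  exact IsCyclic.card_orderOf_eq_totient hdvd

end Counting

/-- Non-weighted point count of a weighted projective stack over `F_q`: the number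
of orbits of the weighted scaling action of `Fˣ` on `F_q^{N+1} ∖ {0}` equals
`∑_{r ∣ q−1} φ(r)·(q^{n_r} − 1)/(q−1)`, where `n_r = #{i : r ∣ λ_i}`. -/
theorem stmt_12 (F : Type*) [Field F] [Fintype F] [DecidableEq F] (N : ℕ)
    (lam : Fin (N + 1) → ℕ) (hlam : ∀ i, 0 < lam i)
    (s : Setoid {x : Fin (N + 1) → F // x ≠ 0})
    (hs : ∀ x y, s.r x y ↔ ∃ u : Fˣ,
        ∀ i, (y : Fin (N + 1) → F) i = (u : F) ^ lam i * (x : Fin (N + 1) → F) i) :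
    (Nat.card (Quotient s) : ℚ)
      = ∑ r ∈ (Fintype.card F - 1).divisors,
          (Nat.totient r : ℚ) *
            ((Fintype.card F : ℚ) ^ (Finset.univ.filter fun i => r ∣ lam i).card - 1)
              / ((Fintype.card F : ℚ) - 1) := by
  classical
  have hseq : s = orbitRel Fˣ (WP F N lam) := by
    refine Setoid.ext fun x y => ?_
    rw [hs]
    constructor
    · rintro ⟨u, hu⟩
      refine ⟨u⁻¹, Subtype.ext (funext fun i => ?_)⟩
      show ((u⁻¹ : Fˣ) : F) ^ lam i * y.1 i = x.1 i
      rw [hu i, ← mul_assoc, ← mul_pow]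
      simp
    · rintro ⟨u, hu⟩
      refine ⟨u⁻¹, fun i => ?_⟩
      have h1 : (u : F) ^ lam i * y.1 i = x.1 i :=
        congrFun (congrArg Subtype.val hu) i
      show y.1 i = ((u⁻¹ : Fˣ) : F) ^ lam i * x.1 i
      rw [← h1, ← mul_assoc, ← mul_pow]
      simp
  have hcount := wp_nat_count (F := F) (N := N) (lam := lam)
  have hq1 : 1 < Fintype.card F := Fintype.one_lt_card
  have hne : ((Fintype.card F : ℚ) - 1) ≠ 0 := by
    have : (1 : ℚ) < (Fintype.card F : ℚ) := by exact_mod_cast hq1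
    linarith
  rw [hseq]
  have hcast : (Nat.card (Quotient (orbitRel Fˣ (WP F N lam))) : ℚ)
        * ((Fintype.card F : ℚ) - 1)
      = ∑ r ∈ (Fintype.card F - 1).divisors,
          (Nat.totient r : ℚ) *
            ((Fintype.card F : ℚ) ^ (Finset.univ.filter fun i => r ∣ lam i).card - 1) := by
    have := congrArg (Nat.cast : ℕ → ℚ) hcount
    rw [Nat.cast_mul, Nat.cast_sub hq1.le, Nat.cast_sum] at this
    rw [Nat.cast_one] at this
    rw [this]
    refine Finset.sum_congr rfl fun r hr => ?_
    rw [Nat.cast_mul, Nat.cast_sub (Nat.one_le_pow _ _ (by omega)), Nat.cast_pow,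
      Nat.cast_one]
  calc (Nat.card (Quotient (orbitRel Fˣ (WP F N lam))) : ℚ)
      = (∑ r ∈ (Fintype.card F - 1).divisors,
          (Nat.totient r : ℚ) *
            ((Fintype.card F : ℚ) ^ (Finset.univ.filter fun i => r ∣ lam i).card - 1))
          / ((Fintype.card F : ℚ) - 1) := by
        rw [eq_div_iff hne]; exact hcast
    _ = _ := by
        rw [Finset.sum_div]
end
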